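/- Let Γ ⊆ Σ be compact with σ(Γ) ⊆ Γ, and A ⊆ Γ compact. Define N_n(A) = max{ #{i ∈ Γ_n : A' ∩ [i] ≠ ∅} : A' is a microset of A }. Then the sequence (N_n(A))_{n≥1} is submultiplicative: N_{n+m}(A) ≤ N_n(A)·N_m(A) for all n, m ∈ ℕ. -/

import Mathlib

open Metric Filter Set

/-- The `2^{-n}`-metric on the sequence space `Σ = {1,…,κ}^ℕ`. -/
noncomputable local instance seqMetric (κ : ℕ) : MetricSpace (ℕ → Fin κ) :=
  PiNat.metricSpace

/-- The left shift on `Σ = {1,…,κ}^ℕ`. -/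
def shiftMap {κ : ℕ} (x : ℕ → Fin κ) : ℕ → Fin κ := fun n => x (n + 1)

/-- The prefix of length `n` of an infinite word. -/
def pre {κ : ℕ} (x : ℕ → Fin κ) (n : ℕ) : List (Fin κ) := List.ofFn (fun k : Fin n => x k)

/-- The cylinder set `[w]` of a finite word `w`. -/
def cylSet {κ : ℕ} (w : List (Fin κ)) : Set (ℕ → Fin κ) := {x | pre x w.length = w}

/-- The symbolic magnification `β_w(A) = σ^{|w|}(A ∩ [w])`. -/
def miniset {κ : ℕ} (w : List (Fin κ)) (A : Set (ℕ → Fin κ)) : Set (ℕ → Fin κ) :=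
  (fun x => fun n => x (n + w.length)) '' (A ∩ cylSet w)

/-- `A'` is a microset of `A` (relative to `Γ`): a compact subset of `Γ` that is a
limit, in the Hausdorff metric, of minisets `β_w(A)`. -/
def IsMicroset {κ : ℕ} (Γ A A' : Set (ℕ → Fin κ)) : Prop :=
  A' ⊆ Γ ∧ IsCompact A' ∧ ∃ w : ℕ → List (Fin κ),
    Tendsto (fun n => EMetric.hausdorffEdist (miniset (w n) A) A') atTop (nhds 0)

/-- `w` belongs to `Γ_*`, the set of finite prefixes of elements of `Γ`. -/
def isPrefixWord {κ : ℕ} (Γ : Set (ℕ → Fin κ)) (w : List (Fin κ)) : Prop :=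
  ∃ x ∈ Γ, pre x w.length = w

/-- `N_n(A)`: the maximal number of cylinders `[i]`, `i ∈ Γ_n`, met by a microset
of `A`. -/
noncomputable def NN {κ : ℕ} (Γ A : Set (ℕ → Fin κ)) (n : ℕ) : ℕ :=
  sSup {k : ℕ | ∃ A' : Set (ℕ → Fin κ), IsMicroset Γ A A' ∧
    k = {w : List (Fin κ) | w.length = n ∧ isPrefixWord Γ w ∧
      (A' ∩ cylSet w).Nonempty}.ncard}

namespace NNaux

open scoped NNReal ENNReal

variable {κ : ℕ}

def shf (a : ℕ) (x : ℕ → Fin κ) : ℕ → Fin κ := fun k => x (k + a)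

@[simp] lemma length_pre (x : ℕ → Fin κ) (n : ℕ) : (pre x n).length = n := by
  simp [pre]

lemma shf_shf (a b : ℕ) (x : ℕ → Fin κ) : shf b (shf a x) = shf (a + b) x := by
  funext k; exact congrArg x (by omega)

lemma pre_eq_pre_iff {x y : ℕ → Fin κ} {n : ℕ} : pre x n = pre y n ↔ ∀ k < n, x k = y k := by
  rw [pre, pre, List.ofFn_inj, funext_iff]
  exact ⟨fun h k hk => h ⟨k, hk⟩, fun h k => h k k.isLt⟩

lemma pre_eq_iff_dist_le {x y : ℕ → Fin κ} {n : ℕ} :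
    pre x n = pre y n ↔ dist x y ≤ (1/2 : ℝ)^n := by
  rw [pre_eq_pre_iff]
  exact ⟨fun h => PiNat.mem_cylinder_iff_dist_le.mp (fun i hi => h i hi),
    fun h k hk => PiNat.mem_cylinder_iff_dist_le.mpr h k hk⟩

lemma pre_eq_of_edist_le {x y : ℕ → Fin κ} {n : ℕ}
    (h : edist x y ≤ ENNReal.ofReal ((1/2 : ℝ)^n)) : pre x n = pre y n := by
  rw [pre_eq_iff_dist_le]
  rw [edist_dist] at h
  exact (ENNReal.ofReal_le_ofReal_iff (by positivity)).mp h

lemma pre_append (x : ℕ → Fin κ) (a b : ℕ) : pre x (a + b) = pre x a ++ pre (shf a x) b := by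
  unfold pre shf
  rw [List.ofFn_add]
  congr 1
  exact congrArg List.ofFn (funext fun i => by simp [Nat.add_comm])

lemma pre_take (x : ℕ → Fin κ) (a b : ℕ) : (pre x (a + b)).take a = pre x a := by
  rw [pre_append, List.take_left' (length_pre x a)]

lemma pre_drop (x : ℕ → Fin κ) (a b : ℕ) : (pre x (a + b)).drop a = pre (shf a x) b := by
  rw [pre_append, List.drop_left' (length_pre x a)]

/-! ### The shift is Lipschitz -/

lemma lipschitzWith_shf (a : ℕ) : LipschitzWith (2^a) (shf a : (ℕ → Fin κ) → ℕ → Fin κ) := by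
  apply LipschitzWith.of_dist_le_mul
  intro x y
  rcases eq_or_ne (shf a x) (shf a y) with h | h
  · rw [h, dist_self]; positivity
  · have hxy : x ≠ y := by rintro rfl; exact h rfl
    have h1 : dist (shf a x) (shf a y) = (1/2 : ℝ)^(PiNat.firstDiff (shf a x) (shf a y)) :=
      PiNat.dist_eq_of_ne h
    have h2 : dist x y = (1/2 : ℝ)^(PiNat.firstDiff x y) := PiNat.dist_eq_of_ne hxy
    have h3 : PiNat.firstDiff x y ≤ PiNat.firstDiff (shf a x) (shf a y) + a := by
      by_contra hc
      push_neg at hc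
      exact PiNat.apply_firstDiff_ne h (PiNat.apply_eq_of_lt_firstDiff (x := x) (y := y) hc)
    rw [h1, h2]
    push_cast
    set b := PiNat.firstDiff (shf a x) (shf a y)
    set c := PiNat.firstDiff x y
    have hpow : (1/2 : ℝ)^(b + a) ≤ (1/2 : ℝ)^c :=
      pow_le_pow_of_le_one (by norm_num) (by norm_num) h3
    have key : (1/2 : ℝ)^b = 2^a * (1/2 : ℝ)^(b + a) := by
      rw [pow_add, ← mul_assoc]
      rw [show (2:ℝ)^a * (1/2:ℝ)^b = (1/2:ℝ)^b * 2^a by ring, mul_assoc, ← mul_pow]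
      norm_num
    rw [key]
    exact mul_le_mul_of_nonneg_left hpow (by positivity)

/-! ### Cylinders -/

lemma mem_cylSet_iff {x : ℕ → Fin κ} {w : List (Fin κ)} :
    x ∈ cylSet w ↔ pre x w.length = w := Iff.rfl

lemma isClosed_cylSet (u : List (Fin κ)) : IsClosed (cylSet u) := by
  rw [← isOpen_compl_iff, Metric.isOpen_iff]
  intro x hx
  refine ⟨(1/2 : ℝ)^u.length, by positivity, fun y hy hyu => hx ?_⟩
  have : pre y u.length = pre x u.length :=
    pre_eq_iff_dist_le.mpr (mem_ball.mp hy).le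
  exact mem_cylSet_iff.mpr (this ▸ hyu)

/-! ### minisets -/

variable {κ : ℕ}

lemma miniset_eq_image (w : List (Fin κ)) (A : Set (ℕ → Fin κ)) :
    miniset w A = shf w.length '' (A ∩ cylSet w) := rfl

lemma miniset_nil (A : Set (ℕ → Fin κ)) : miniset ([] : List (Fin κ)) A = A := by
  have h1 : cylSet ([] : List (Fin κ)) = univ := by
    ext x; simp [cylSet, pre]
  rw [miniset_eq_image, h1, inter_univ]
  have h2 : (shf 0 : (ℕ → Fin κ) → ℕ → Fin κ) = id := rfl
  rw [show ([] : List (Fin κ)).length = 0 from rfl, h2, image_id]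

lemma miniset_append (w u : List (Fin κ)) (A : Set (ℕ → Fin κ)) :
    miniset (w ++ u) A = miniset u (miniset w A) := by
  ext y
  simp only [miniset_eq_image, mem_image, mem_inter_iff, mem_cylSet_iff, List.length_append]
  constructor
  · rintro ⟨x, ⟨hxA, hxw⟩, rfl⟩
    have hx : pre x (w.length + u.length) = w ++ u := hxw
    rw [pre_append] at hx
    obtain ⟨hw, hu⟩ := List.append_inj hx (by simp)
    refine ⟨shf w.length x, ⟨⟨x, ⟨hxA, hw⟩, rfl⟩, hu⟩, ?_⟩
    rw [shf_shf]
  · rintro ⟨z, ⟨⟨x, ⟨hxA, hxw⟩, rfl⟩, hu⟩, rfl⟩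
    refine ⟨x, ⟨hxA, ?_⟩, (shf_shf _ _ _).symm⟩
    show pre x (w.length + u.length) = w ++ u
    rw [pre_append, hxw, hu]

lemma shf_mem_of_shift_invariant {Γ : Set (ℕ → Fin κ)} (hΓs : shiftMap '' Γ ⊆ Γ)
    {x : ℕ → Fin κ} (hx : x ∈ Γ) (a : ℕ) : shf a x ∈ Γ := by
  induction a with
  | zero => exact hx
  | succ a ih =>
    have : shf (a + 1) x = shiftMap (shf a x) := by
      funext k; exact congrArg x (by omega)
    rw [this]
    exact hΓs ⟨_, ih, rfl⟩

/-! ### Hausdorff distance lemmas -/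

lemma infEdist_image_le {X Y : Type*} [PseudoEMetricSpace X] [PseudoEMetricSpace Y]
    {K : ℝ≥0} (hK : K ≠ 0) {f : X → Y} (hf : LipschitzWith K f) (x : X) (t : Set X) :
    EMetric.infEdist (f x) (f '' t) ≤ K * EMetric.infEdist x t := by
  have hrw : (K : ℝ≥0∞) * EMetric.infEdist x t = ⨅ y ∈ t, (K : ℝ≥0∞) * edist x y := by
    rw [EMetric.infEdist, Metric.infEDist]
    simp_rw [ENNReal.mul_iInf_of_ne (by exact_mod_cast hK) ENNReal.coe_ne_top]
  rw [hrw]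
  refine le_iInf₂ fun y hy => ?_
  exact (EMetric.infEdist_le_edist_of_mem (mem_image_of_mem f hy)).trans (hf x y)

lemma hausdorffEdist_image_le {X Y : Type*} [PseudoEMetricSpace X] [PseudoEMetricSpace Y]
    {K : ℝ≥0} (hK : K ≠ 0) {f : X → Y} (hf : LipschitzWith K f) (s t : Set X) :
    EMetric.hausdorffEdist (f '' s) (f '' t) ≤ K * EMetric.hausdorffEdist s t := by
  apply EMetric.hausdorffEdist_le_of_infEdist
  · rintro _ ⟨x, hx, rfl⟩
    exact (infEdist_image_le hK hf x t).trans
      (mul_le_mul_right (EMetric.infEdist_le_hausdorffEdist_of_mem hx) _)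
  · rintro _ ⟨x, hx, rfl⟩
    refine (infEdist_image_le hK hf x s).trans (mul_le_mul_right ?_ _)
    exact (EMetric.infEdist_le_hausdorffEdist_of_mem hx).trans
      (le_of_eq EMetric.hausdorffEdist_comm)

lemma hausdorffEdist_inter_cylSet {B C : Set (ℕ → Fin κ)} {u : List (Fin κ)} {r : ℝ≥0∞}
    (h : EMetric.hausdorffEdist B C < r) (hr : r ≤ ENNReal.ofReal ((1/2 : ℝ)^u.length)) :
    EMetric.hausdorffEdist (B ∩ cylSet u) (C ∩ cylSet u) ≤ r := by
  apply EMetric.hausdorffEdist_le_of_infEdist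
  · rintro x ⟨hxB, hxu⟩
    have h1 : EMetric.infEdist x C < r :=
      (EMetric.infEdist_le_hausdorffEdist_of_mem hxB).trans_lt h
    obtain ⟨y, hyC, hxy⟩ := EMetric.infEdist_lt_iff.mp h1
    have hy : pre y u.length = u := by
      rw [← pre_eq_of_edist_le (x := x) (y := y) (hxy.le.trans hr)]
      exact hxu
    exact (EMetric.infEdist_le_edist_of_mem (Set.mem_inter hyC hy)).trans hxy.le
  · rintro x ⟨hxC, hxu⟩
    have h1 : EMetric.infEdist x B < r := by
      refine (EMetric.infEdist_le_hausdorffEdist_of_mem hxC).trans_lt ?_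
      rwa [EMetric.hausdorffEdist_comm]
    obtain ⟨y, hyB, hxy⟩ := EMetric.infEdist_lt_iff.mp h1
    have hy : pre y u.length = u := by
      rw [← pre_eq_of_edist_le (x := x) (y := y) (hxy.le.trans hr)]
      exact hxu
    exact (EMetric.infEdist_le_edist_of_mem (Set.mem_inter hyB hy)).trans hxy.le

/-! ### Microsets -/

lemma tendsto_hausdorff_miniset {A A' : Set (ℕ → Fin κ)} {w : ℕ → List (Fin κ)}
    (hw : Tendsto (fun k => EMetric.hausdorffEdist (miniset (w k) A) A') atTop (nhds 0))
    (u : List (Fin κ)) :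
    Tendsto (fun k => EMetric.hausdorffEdist (miniset (w k ++ u) A) (miniset u A'))
      atTop (nhds 0) := by
  rw [ENNReal.tendsto_atTop_zero] at hw ⊢
  intro ε hε
  set n := u.length with hn
  set sep : ℝ≥0∞ := ENNReal.ofReal ((1/2 : ℝ)^n) with hsep
  have hsep0 : 0 < sep := ENNReal.ofReal_pos.mpr (by positivity)
  have hsepT : sep ≠ ⊤ := ENNReal.ofReal_ne_top
  set K : ℝ≥0 := 2^n with hK
  have hK0 : K ≠ 0 := pow_ne_zero n two_ne_zero
  set δ : ℝ≥0∞ := min sep (ε / K) with hδ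
  have hδ0 : 0 < δ := lt_min hsep0 (ENNReal.div_pos hε.ne' ENNReal.coe_ne_top)
  have hδT : δ ≠ ⊤ := ne_top_of_le_ne_top hsepT (min_le_left _ _)
  obtain ⟨N, hN⟩ := hw (δ/2) (ENNReal.half_pos hδ0.ne')
  refine ⟨N, fun k hk => ?_⟩
  have hlt : EMetric.hausdorffEdist (miniset (w k) A) A' < δ :=
    (hN k hk).trans_lt (ENNReal.half_lt_self hδ0.ne' hδT)
  have h1 : EMetric.hausdorffEdist (miniset (w k) A ∩ cylSet u) (A' ∩ cylSet u) ≤ δ :=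
    hausdorffEdist_inter_cylSet hlt (min_le_left _ _)
  have h2 : EMetric.hausdorffEdist (miniset (w k ++ u) A) (miniset u A') ≤ K * δ := by
    rw [miniset_append, miniset_eq_image u (miniset (w k) A), miniset_eq_image u A']
    calc EMetric.hausdorffEdist (shf n '' (miniset (w k) A ∩ cylSet u)) (shf n '' (A' ∩ cylSet u))
        ≤ K * EMetric.hausdorffEdist (miniset (w k) A ∩ cylSet u) (A' ∩ cylSet u) :=
          hausdorffEdist_image_le hK0 (lipschitzWith_shf n) _ _
      _ ≤ K * δ := mul_le_mul_right h1 _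
  refine h2.trans ?_
  calc (K : ℝ≥0∞) * δ ≤ K * (ε / K) := mul_le_mul_right (min_le_right _ _) _
    _ ≤ ε := ENNReal.mul_div_le

lemma isMicroset_miniset {Γ A A' : Set (ℕ → Fin κ)} (hΓs : shiftMap '' Γ ⊆ Γ)
    (h : IsMicroset Γ A A') (u : List (Fin κ)) : IsMicroset Γ A (miniset u A') := by
  obtain ⟨hsub, hcomp, w, hw⟩ := h
  refine ⟨?_, ?_, fun k => w k ++ u, tendsto_hausdorff_miniset hw u⟩
  · rintro _ ⟨x, ⟨hxA', _⟩, rfl⟩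
    exact shf_mem_of_shift_invariant hΓs (hsub hxA') u.length
  · exact (hcomp.inter_right (isClosed_cylSet u)).image (lipschitzWith_shf u.length).continuous

lemma isMicroset_self {Γ A : Set (ℕ → Fin κ)} (hA : A ⊆ Γ) (hAc : IsCompact A) :
    IsMicroset Γ A A := by
  refine ⟨hA, hAc, fun _ => [], ?_⟩
  simp only [miniset_nil, EMetric.hausdorffEdist, Metric.hausdorffEDist_self]
  exact tendsto_const_nhds (X := ℝ≥0∞)

/-! ### Counting -/

def goodWords (Γ A' : Set (ℕ → Fin κ)) (n : ℕ) : Set (List (Fin κ)) :=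
  {w : List (Fin κ) | w.length = n ∧ isPrefixWord Γ w ∧ (A' ∩ cylSet w).Nonempty}

lemma finite_goodWords (Γ A' : Set (ℕ → Fin κ)) (n : ℕ) : (goodWords Γ A' n).Finite :=
  (List.finite_length_eq (Fin κ) n).subset fun _ hw => hw.1

lemma NN_eq (Γ A : Set (ℕ → Fin κ)) (n : ℕ) :
    NN Γ A n = sSup {k : ℕ | ∃ A' : Set (ℕ → Fin κ), IsMicroset Γ A A' ∧
      k = (goodWords Γ A' n).ncard} := rfl

lemma bddAbove_NNset (Γ A : Set (ℕ → Fin κ)) (n : ℕ) :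
    BddAbove {k : ℕ | ∃ A' : Set (ℕ → Fin κ), IsMicroset Γ A A' ∧
      k = (goodWords Γ A' n).ncard} := by
  refine ⟨{l : List (Fin κ) | l.length = n}.ncard, ?_⟩
  rintro k ⟨A', _, rfl⟩
  exact Set.ncard_le_ncard (fun w hw => hw.1) (List.finite_length_eq (Fin κ) n)

lemma ncard_goodWords_le_NN {Γ A A' : Set (ℕ → Fin κ)} (h : IsMicroset Γ A A') (n : ℕ) :
    (goodWords Γ A' n).ncard ≤ NN Γ A n := by
  rw [NN_eq]
  exact le_csSup (bddAbove_NNset Γ A n) ⟨A', h, rfl⟩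

end NNaux


open NNaux

/-- the sequence `(N_n(A))_n` is submultiplicative. -/
theorem NN_submultiplicative {κ : ℕ} (hκ : 2 ≤ κ) (Γ : Set (ℕ → Fin κ))
    (hΓc : IsCompact Γ) (hΓs : shiftMap '' Γ ⊆ Γ)
    (A : Set (ℕ → Fin κ)) (hA : A ⊆ Γ) (hAc : IsCompact A) (n m : ℕ) :
    NN Γ A (n + m) ≤ NN Γ A n * NN Γ A m := by
  classical
  rw [NN_eq Γ A (n + m)]
  refine csSup_le ⟨(goodWords Γ A (n + m)).ncard, ⟨A, isMicroset_self hA hAc, rfl⟩⟩ ?_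
  rintro k ⟨A', hA', rfl⟩
  -- pass to Finsets
  set F : Finset (List (Fin κ)) := (finite_goodWords Γ A' (n + m)).toFinset with hF
  set T : Finset (List (Fin κ)) := (finite_goodWords Γ A' n).toFinset with hT
  have hmemF : ∀ w, w ∈ F ↔ w ∈ goodWords Γ A' (n + m) := fun w =>
    (finite_goodWords Γ A' (n + m)).mem_toFinset
  have hmemT : ∀ w, w ∈ T ↔ w ∈ goodWords Γ A' n := fun w =>
    (finite_goodWords Γ A' n).mem_toFinset
  -- the `take`-map sends F into T
  have hmaps : ∀ w ∈ F, w.take n ∈ T := by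
    intro w hw
    rw [hmemF] at hw
    obtain ⟨hlen, ⟨x, hxΓ, hxw⟩, z, hzA', hzw⟩ := hw
    rw [hmemT]
    have hlen' : (w.take n).length = n := by
      rw [List.length_take, hlen]; omega
    have hxw' : pre x (n + m) = w := by rw [← hlen]; exact hxw
    have hzw' : pre z (n + m) = w := by rw [← hlen]; exact hzw
    refine ⟨hlen', ⟨x, hxΓ, ?_⟩, z, hzA', ?_⟩
    · rw [hlen', ← hxw', pre_take]
    · show pre z (w.take n).length = w.take n
      rw [hlen', ← hzw', pre_take]
  -- each fiber of the `take`-map has size at most `NN Γ A m`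
  have hfib : ∀ u ∈ T, (F.filter fun w => w.take n = u).card ≤ NN Γ A m := by
    intro u hu
    rw [hmemT] at hu
    obtain ⟨hulen, -, -⟩ := hu
    have hB : IsMicroset Γ A (miniset u A') := isMicroset_miniset hΓs hA' u
    refine le_trans ?_ (ncard_goodWords_le_NN hB m)
    rw [Set.ncard_eq_toFinset_card _ (finite_goodWords Γ (miniset u A') m)]
    apply Finset.card_le_card_of_injOn (fun w => w.drop n)
    · intro w hw
      rw [Finset.mem_coe, Finset.mem_filter] at hw
      obtain ⟨hwF, hwtake⟩ := hw
      rw [hmemF] at hwF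
      obtain ⟨hlen, ⟨x, hxΓ, hxw⟩, z, hzA', hzw⟩ := hwF
      rw [Finset.mem_coe, (finite_goodWords Γ (miniset u A') m).mem_toFinset]
      have hdlen : (w.drop n).length = m := by rw [List.length_drop, hlen]; omega
      have hxw' : pre x (n + m) = w := by rw [← hlen]; exact hxw
      have hzw' : pre z (n + m) = w := by rw [← hlen]; exact hzw
      have hzu : pre z u.length = u := by
        rw [hulen, ← hwtake, ← hzw', pre_take]
      refine ⟨hdlen, ⟨shf n x, shf_mem_of_shift_invariant hΓs hxΓ n, ?_⟩,
        ⟨shf n z, ⟨z, ⟨hzA', hzu⟩, ?_⟩, ?_⟩⟩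
      · rw [hdlen, ← pre_drop x n m, hxw']
      · show shf u.length z = shf n z
        rw [hulen]
      · show pre (shf n z) (w.drop n).length = w.drop n
        rw [hdlen, ← pre_drop z n m, hzw']
    · intro w1 hw1 w2 hw2 hd
      simp only [Finset.coe_filter, Set.mem_setOf_eq] at hw1 hw2
      rw [← List.take_append_drop n w1, ← List.take_append_drop n w2, hw1.2, hw2.2]
      exact congrArg (u ++ ·) hd
  have hTcard : T.card ≤ NN Γ A n := by
    rw [← Set.ncard_eq_toFinset_card _ (finite_goodWords Γ A' n)]
    exact ncard_goodWords_le_NN hA' n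
  calc (goodWords Γ A' (n + m)).ncard
      = F.card := Set.ncard_eq_toFinset_card _ _
    _ ≤ NN Γ A m * T.card := Finset.card_le_mul_card_image_of_maps_to hmaps _ hfib
    _ ≤ NN Γ A m * NN Γ A n := Nat.mul_le_mul_left _ hTcard
    _ = NN Γ A n * NN Γ A m := Nat.mul_comm _ _
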